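/- Let m, d, s, t be natural numbers and α, η positive reals with t ≥ s and η ≤ α^(2d)/16. Let G be a bipartite graph with vertex partition V₁ ∪ V₂, where |V₁| = |V₂| = m, of minimum degree at least α·m. Then there exist sets A₁ ⊆ V₁ and A₂ ⊆ V₂ such that: (i) |A₁|, |A₂| ≥ α^t·m/4, and (ii) for all θ ≤ η·α^(d+t)·m/2, μ_{s,θ}(A₁^d; A₂) ≤ 2·η^(t/2) and μ_{s,θ}(A₂^d; A₁) ≤ 2·η^(t/2). -/

import Mathlib

open Finset
open scoped ENNReal Classical

namespace BurrErdosLee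

/-- The set of common neighbors, inside `T`, of the coordinates of the tuple `Q`. -/
noncomputable def commonNbrs {V : Type} [Fintype V] [DecidableEq V] (G : SimpleGraph V)
    {d : ℕ} (Q : Fin d → V) (T : Finset V) : Finset V :=
  T.filter fun x => ∀ a, G.Adj (Q a) x

/-- Power with the convention `0 ^ 0 = 0` (used for defects). -/
noncomputable def dpow (x : ℝ≥0∞) (s : ℕ) : ℝ≥0∞ :=
  if x = 0 then 0 else x ^ s

/-- The `θ`-defect of the tuple `Q` in `T`: it is `0` if `Q` has at least `θ` common
neighbors in `T`, and `θ / |N(Q;T)|` otherwise (`∞` when there are no common neighbors). -/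
noncomputable def defect {V : Type} [Fintype V] [DecidableEq V] (G : SimpleGraph V) (θ : ℝ)
    {d : ℕ} (Q : Fin d → V) (T : Finset V) : ℝ≥0∞ :=
  if θ ≤ ((commonNbrs G Q T).card : ℝ) then 0
  else ENNReal.ofReal θ / ((commonNbrs G Q T).card : ℝ≥0∞)

/-- The `s`-th moment of the `θ`-defect of the family of tuples `𝒬` in `T`. -/
noncomputable def mu {V : Type} [Fintype V] [DecidableEq V] (G : SimpleGraph V)
    (s : ℕ) (θ : ℝ) {d : ℕ} (𝒬 : Finset (Fin d → V)) (T : Finset V) : ℝ≥0∞ :=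
  (∑ Q ∈ 𝒬, dpow (defect G θ Q T) s) / (𝒬.card : ℝ≥0∞)

/-- `G` contains a copy of `H`. -/
def Contains {W V : Type} (G : SimpleGraph V) (H : SimpleGraph W) : Prop :=
  ∃ f : W → V, Function.Injective f ∧ ∀ ⦃a b⦄, H.Adj a b → G.Adj (f a) (f b)

/-- `H` is `d`-degenerate: every subgraph has a vertex of degree at most `d`. -/
def IsDegen {W : Type} [Fintype W] (d : ℕ) (H : SimpleGraph W) : Prop :=
  ∀ S : Finset W, S.Nonempty → ∃ v ∈ S, (S.filter fun w => H.Adj v w).card ≤ d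

/-- The density of a graph: the fraction of pairs of distinct vertices forming an edge. -/
noncomputable def graphDensity {V : Type} [Fintype V] (G : SimpleGraph V) : ℝ :=
  ((Finset.univ.filter fun p : V × V => G.Adj p.1 p.2).card : ℝ) /
    ((Fintype.card V : ℝ) * ((Fintype.card V : ℝ) - 1))

/-- The density of the bipartite graph between the vertex sets `V1` and `V2`. -/
noncomputable def crossDensity {V : Type} [Fintype V] (G : SimpleGraph V)
    (V1 V2 : Finset V) : ℝ :=
  (((V1 ×ˢ V2).filter fun p => G.Adj p.1 p.2).card : ℝ) / ((V1.card : ℝ) * (V2.card : ℝ))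

/-- For a family `A₁, …, A_r`, the union `A_{-j}` of all the sets except `A j`. -/
noncomputable def unionOthers {V : Type} [DecidableEq V] {r : ℕ} (A : Fin r → Finset V)
    (j : Fin r) : Finset V :=
  (Finset.univ.erase j).biUnion A

end BurrErdosLee

open BurrErdosLee

/-!
Dependent random choice, applied twice. Pick a `t`-tuple `v` of `V₂` with weight `|N(v)|^(d+t)`
and let `A₁ = N(v) ⊆ V₁`. Double counting turns the weighted sum of the defects of the
`(d+t)`-tuples of `A₁` into a sum over all `(d+t)`-tuples `P` of `V₁` of `|N(P)|^t ω_θ(P)^s`,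
and each term is at most `θ^t` because `s ≤ t`. Jensen's inequality bounds the total weight from
below through the minimum degree, so by Markov's inequality some `v` gives a large `A₁` with
`μ(A₁^(d+t); V₂) ≤ 2 (η/2)^t`. Next pick a `t`-tuple `u` of `A₁` with weight `|N(u)|^d` and let
`A₂ = N(u) ⊆ V₂`. The same count bounds `μ(A₂^d; A₁)`, while the average of `μ(A₁^d; A₂)` over
`u` is `μ(A₁^(d+t); V₂)`, because the common neighbourhood of `Q` in `N(u)` is that of the
concatenated tuple `(Q, u)`. Markov's inequality once more yields a `u` meeting all the bounds.
-/

namespace BurrErdosLee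

lemma sum_piFinset_fin_add {α M : Type*} [AddCommMonoid M] {d t : ℕ} (A : Finset α)
    (F : (Fin (d + t) → α) → M) :
    ∑ P ∈ Fintype.piFinset (fun _ : Fin (d + t) => A), F P =
      ∑ Q ∈ Fintype.piFinset (fun _ : Fin d => A), ∑ u ∈ Fintype.piFinset (fun _ : Fin t => A),
        F (Fin.append Q u) := by
  rw [← sum_product' (f := fun Q u => F (Fin.append Q u))]
  refine sum_equiv (Fin.appendEquiv d t).symm (fun P => ?_) (fun P _ => ?_)
  · simp [Fintype.mem_piFinset, Fin.forall_fin_add]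
  · simp [Fin.append_castAdd_natAdd]

lemma pow_mul_card_le_sum_pow {R ι : Type*} [CommSemiring R] [LinearOrder R]
    [IsStrictOrderedRing R] [ExistsAddOfLE R]
    {S : Finset ι} {f : ι → R} (hf : ∀ i ∈ S, 0 ≤ f i) {a : R} (ha : 0 ≤ a)
    (h : a * #S ≤ ∑ i ∈ S, f i) : ∀ k : ℕ, a ^ k * #S ≤ ∑ i ∈ S, f i ^ k
  | 0 => by simp
  | n + 1 => by
    rcases S.eq_empty_or_nonempty with rfl | hS
    · simp
    have hS : (0 : R) < #S ^ n := by positivity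
    refine le_of_mul_le_mul_left ?_ hS
    calc #S ^ n * (a ^ (n + 1) * #S) = (a * #S) ^ (n + 1) := by ring
      _ ≤ (∑ i ∈ S, f i) ^ (n + 1) := by gcongr
      _ ≤ #S ^ n * ∑ i ∈ S, f i ^ (n + 1) := pow_sum_le_card_mul_sum_pow hf n

section Selection

variable {ι M : Type*} {S : Finset ι}

lemma exists_mem_of_sum_filter_not_lt [AddCommMonoid M] [Preorder M] {w : ι → M} {p : ι → Prop}
    [DecidablePred p] (h : ∑ i ∈ S with ¬ p i, w i < ∑ i ∈ S, w i) : ∃ i ∈ S, p i := by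
  by_contra! hp
  rw [filter_true_of_mem hp] at h
  exact lt_irrefl _ h

lemma sum_filter_not_and_le [AddCommMonoid M] [PartialOrder M] [CanonicallyOrderedAdd M]
    (w : ι → M) (p q : ι → Prop) [DecidablePred p] [DecidablePred q] :
    ∑ i ∈ S with ¬ (p i ∧ q i), w i ≤ ∑ i ∈ S with ¬ p i, w i + ∑ i ∈ S with ¬ q i, w i := by
  simp only [not_and_or, filter_or]
  rw [← sum_union_inter]
  exact le_self_add

lemma mul_sum_filter_not_le_mul_le (w Z : ι → ℝ≥0∞) (l : ℝ≥0∞) :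
    l * ∑ i ∈ S with ¬ Z i ≤ l * w i, w i ≤ ∑ i ∈ S, Z i := by
  rw [mul_sum]
  calc ∑ i ∈ S with ¬ Z i ≤ l * w i, l * w i ≤ ∑ i ∈ S with ¬ Z i ≤ l * w i, Z i :=
        sum_le_sum fun i hi => (not_le.mp (mem_filter.mp hi).2).le
    _ ≤ ∑ i ∈ S, Z i := sum_le_sum_of_subset (filter_subset _ _)

lemma le_one_of_mul_card_le_card_filter {α : ℝ} {p : ι → Prop} [DecidablePred p]
    (hS : S.Nonempty) (h : α * #S ≤ #{i ∈ S | p i}) : α ≤ 1 := by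
  have hle : (#{i ∈ S | p i} : ℝ) ≤ #S := by exact_mod_cast card_filter_le _ _
  have hpos : (0 : ℝ) < #S := by exact_mod_cast hS.card_pos
  nlinarith

lemma natCast_pow_eq_ofReal (n k : ℕ) : (n : ℝ≥0∞) ^ k = ENNReal.ofReal ((n : ℝ) ^ k) := by
  rw [ENNReal.ofReal_pow n.cast_nonneg, ENNReal.ofReal_natCast]

lemma le_ofReal_of_ofReal_mul_le {x : ℝ≥0∞} {l y : ℝ} (hl : 0 < l)
    (h : ENNReal.ofReal l * x ≤ ENNReal.ofReal (l * y)) : x ≤ ENNReal.ofReal y := by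
  rw [ENNReal.ofReal_mul hl.le] at h
  exact (ENNReal.mul_le_mul_iff_right (by simpa using hl) ENNReal.ofReal_ne_top).mp h

end Selection

section Parameters

variable {α η : ℝ} {d t : ℕ}

lemma rpow_div_two_sq (hη : 0 ≤ η) (t : ℕ) : (η ^ ((t : ℝ) / 2)) ^ 2 = η ^ t := by
  rw [← Real.rpow_natCast _ 2, ← Real.rpow_mul hη, ← Real.rpow_natCast]
  norm_num

lemma rpow_div_two_mul_four_pow_le (hα : 0 ≤ α) (hη0 : 0 ≤ η) (hη : η ≤ α ^ (2 * d) / 16) :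
    η ^ ((t : ℝ) / 2) * 4 ^ t ≤ α ^ (d * t) := by
  have h : η ≤ (α ^ d / 4) ^ 2 := by rw [div_pow, ← pow_mul, mul_comm]; norm_num; exact hη
  calc η ^ ((t : ℝ) / 2) * 4 ^ t ≤ ((α ^ d / 4) ^ 2) ^ ((t : ℝ) / 2) * 4 ^ t := by gcongr
    _ = α ^ (d * t) := by
        rw [← Real.rpow_natCast _ 2, ← Real.rpow_mul (by positivity),
          show ((2 : ℕ) : ℝ) * ((t : ℝ) / 2) = (t : ℕ) by push_cast; ring, Real.rpow_natCast,
          div_pow, div_mul_cancel₀ _ (by positivity), ← pow_mul]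

variable {m q : ℝ}

lemma pow_mul_threshold_pow_le (hα : 0 ≤ α) (hα₁ : α ≤ 1) (hm : 0 ≤ m) (ht : t ≠ 0) (hq0 : 0 ≤ q)
    (hq2 : q ^ 2 = η ^ t) (hq : q * 4 ^ t ≤ α ^ (d * t)) {a : ℝ} (ha : α ^ t * m / 4 ≤ a) :
    m ^ d * (η * α ^ (d + t) * m / 2) ^ t ≤ 2 * q * ((α ^ t * m) ^ d * a ^ t / 4) := by
  have h2 : (2 : ℝ) * 2 ^ t ≤ 4 ^ t := by
    rw [show (4 : ℝ) = 2 * 2 by norm_num, mul_pow]; gcongr; exact le_self_pow₀ (by norm_num) ht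
  have hc : (α ^ t * m) ^ t ≤ (4 * a) ^ t := pow_le_pow_left₀ (by positivity) (by linarith) t
  have ha0 : 0 ≤ a := le_trans (by positivity) ha
  have key : q * 2 ^ t * 2 ≤ 1 := by nlinarith [pow_le_one₀ (n := d * t) hα hα₁]
  calc m ^ d * (η * α ^ (d + t) * m / 2) ^ t
      = (α ^ t * m) ^ d * (α ^ t * m) ^ t * η ^ t / 2 ^ t := by rw [div_pow]; ring
    _ ≤ (α ^ t * m) ^ d * (4 * a) ^ t * q ^ 2 / 2 ^ t := by rw [← hq2]; gcongr
    _ = (α ^ t * m) ^ d * a ^ t * q * (q * 2 ^ t * 2) / 2 := by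
        rw [mul_pow (4 : ℝ) a t, show (4 : ℝ) ^ t = 2 ^ t * 2 ^ t by rw [← mul_pow]; norm_num]
        field_simp
    _ ≤ (α ^ t * m) ^ d * a ^ t * q * 1 / 2 := by gcongr
    _ = 2 * q * ((α ^ t * m) ^ d * a ^ t / 4) := by ring

lemma two_mul_half_pow_mul_pow_le (hm : 0 ≤ m) (ht : t ≠ 0) (hq0 : 0 ≤ q) (hq2 : q ^ 2 = η ^ t)
    (hq : q * 4 ^ t ≤ α ^ (d * t)) : 2 * (η / 2) ^ t * m ^ d ≤ 2 * q * ((α ^ t * m) ^ d / 4) := by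
  have h8 : (4 : ℝ) ≤ 2 ^ t * 4 ^ t := by
    calc (4 : ℝ) ≤ 8 := by norm_num
      _ ≤ 8 ^ t := le_self_pow₀ (by norm_num) ht
      _ = 2 ^ t * 4 ^ t := by rw [← mul_pow]; norm_num
  have key : q * 4 ≤ 2 ^ t * α ^ (d * t) := by nlinarith [pow_pos (show (0 : ℝ) < 2 by norm_num) t]
  calc 2 * (η / 2) ^ t * m ^ d = q * (q * 4) * m ^ d / (2 * 2 ^ t) := by
        rw [div_pow, ← hq2]; ring
    _ ≤ q * (2 ^ t * α ^ (d * t)) * m ^ d / (2 * 2 ^ t) := by gcongr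
    _ = 2 * q * ((α ^ t * m) ^ d / 4) := by
        rw [mul_pow, ← pow_mul, mul_comm t d]; field_simp; ring

end Parameters

lemma dpow_le_pow (x : ℝ≥0∞) (s : ℕ) : dpow x s ≤ x ^ s := by
  unfold dpow; split_ifs <;> simp

lemma dpow_mono {x y : ℝ≥0∞} (h : x ≤ y) (s : ℕ) : dpow x s ≤ dpow y s := by
  rcases eq_zero_or_pos x with rfl | hx
  · simp [dpow]
  rw [dpow, dpow, if_neg hx.ne', if_neg (hx.trans_le h).ne']
  exact pow_le_pow_left' h s

lemma filter_adj_eq_of_mem {V : Type*} [Fintype V] {G : SimpleGraph V} {V₁ V₂ : Finset V}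
    (hdisj : Disjoint V₁ V₂)
    (hbip : ∀ x y, G.Adj x y → (x ∈ V₁ ∧ y ∈ V₂) ∨ (x ∈ V₂ ∧ y ∈ V₁)) {x : V} (hx : x ∈ V₁) :
    {y ∈ V₂ | G.Adj x y} = Finset.univ.filter fun y => G.Adj x y := by
  ext y
  simp only [mem_filter, mem_univ, true_and, and_iff_right_iff_imp]
  intro h
  rcases hbip x y h with ⟨-, hy⟩ | ⟨hx', -⟩
  · exact hy
  · exact absurd hx' (disjoint_left.mp hdisj hx)

section Graph

variable {V : Type} [Fintype V] [DecidableEq V] {G : SimpleGraph V}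

section Defect

lemma defect_mono {θ θ' : ℝ} (h : θ ≤ θ') {d : ℕ} (Q : Fin d → V) (T : Finset V) :
    defect G θ Q T ≤ defect G θ' Q T := by
  unfold defect
  split_ifs with h₁ h₂ h₂
  · exact le_rfl
  · exact zero_le
  · exact absurd (h.trans h₂) h₁
  · gcongr

lemma card_commonNbrs_pow_mul_dpow_defect_le {s t : ℕ} (hst : s ≤ t) (θ : ℝ) {d : ℕ}
    (Q : Fin d → V) (T : Finset V) :
    (#(commonNbrs G Q T) : ℝ≥0∞) ^ t * dpow (defect G θ Q T) s ≤ ENNReal.ofReal θ ^ t := by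
  set n : ℝ≥0∞ := (#(commonNbrs G Q T) : ℝ≥0∞)
  unfold defect
  split_ifs with hθ
  · simp [dpow]
  have hn : n ≤ ENNReal.ofReal θ := by
    simp only [n, ← ENNReal.ofReal_natCast]; exact ENNReal.ofReal_le_ofReal (not_le.mp hθ).le
  calc n ^ t * dpow (ENNReal.ofReal θ / n) s
      ≤ n ^ (t - s) * (n * (ENNReal.ofReal θ / n)) ^ s := by
        rw [mul_pow, ← mul_assoc, ← pow_add, Nat.sub_add_cancel hst]
        gcongr; exact dpow_le_pow _ _
    _ ≤ ENNReal.ofReal θ ^ (t - s) * ENNReal.ofReal θ ^ s := by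
        gcongr; exact ENNReal.mul_div_le
    _ = ENNReal.ofReal θ ^ t := by rw [← pow_add, Nat.sub_add_cancel hst]

variable {s : ℕ} {θ : ℝ} {d : ℕ} {𝒬 : Finset (Fin d → V)} {T : Finset V}

lemma mu_le_iff {l : ℝ≥0∞} :
    mu G s θ 𝒬 T ≤ l ↔ ∑ Q ∈ 𝒬, dpow (defect G θ Q T) s ≤ l * #𝒬 := by
  rcases 𝒬.eq_empty_or_nonempty with rfl | h𝒬
  · simp [mu]
  exact ENNReal.div_le_iff (by simpa using h𝒬.ne_empty) (ENNReal.natCast_ne_top _)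

lemma mu_mono {θ' : ℝ} (h : θ ≤ θ') : mu G s θ 𝒬 T ≤ mu G s θ' 𝒬 T := by
  unfold mu
  gcongr with Q
  exact dpow_mono (defect_mono h Q T) s

lemma mu_eq_zero_of_le_card (h : ∀ Q ∈ 𝒬, θ ≤ #(commonNbrs G Q T)) : mu G s θ 𝒬 T = 0 := by
  unfold mu
  rw [sum_eq_zero fun Q hQ => by simp [defect, h Q hQ, dpow], ENNReal.zero_div]

lemma mu_zero_le_one : mu G 0 θ 𝒬 T ≤ 1 := by
  rw [mu_le_iff, one_mul]
  calc ∑ Q ∈ 𝒬, dpow (defect G θ Q T) 0 ≤ ∑ _Q ∈ 𝒬, 1 :=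
        sum_le_sum fun Q _ => (dpow_le_pow _ _).trans_eq (pow_zero _)
    _ = #𝒬 := by simp

end Defect

section CommonNbrs

lemma commonNbrs_subset {d : ℕ} (Q : Fin d → V) (T : Finset V) : commonNbrs G Q T ⊆ T :=
  filter_subset _ _

lemma commonNbrs_fin_zero (Q : Fin 0 → V) (T : Finset V) : commonNbrs G Q T = T := by
  simp [commonNbrs]

lemma commonNbrs_fin_one (x : Fin 1 → V) (T : Finset V) :
    commonNbrs G x T = {y ∈ T | G.Adj (x 0) y} := by
  simp [commonNbrs, Fin.forall_fin_one]

lemma commonNbrs_commonNbrs {d t : ℕ} (Q : Fin d → V) (u : Fin t → V) (T : Finset V) :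
    commonNbrs G Q (commonNbrs G u T) = commonNbrs G (Fin.append Q u) T := by
  ext x
  simp only [commonNbrs, mem_filter, Fin.forall_fin_add, Fin.append_left, Fin.append_right]
  tauto

lemma defect_commonNbrs {θ : ℝ} {d t : ℕ} (Q : Fin d → V) (u : Fin t → V) (T : Finset V) :
    defect G θ Q (commonNbrs G u T) = defect G θ (Fin.append Q u) T := by
  rw [defect, defect, commonNbrs_commonNbrs]

lemma mem_piFinset_commonNbrs {k l : ℕ} {v : Fin k → V} {C : Finset V} {P : Fin l → V} :
    P ∈ Fintype.piFinset (fun _ => commonNbrs G v C) ↔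
      P ∈ Fintype.piFinset (fun _ => C) ∧ ∀ i j, G.Adj (v i) (P j) := by
  simp only [Fintype.mem_piFinset, commonNbrs, mem_filter, forall_and]
  exact and_congr_right' forall_comm

/-- Double counting of the pairs `(v, P) ∈ B^k × C^l` with every `v i` adjacent to every `P j`. -/
lemma sum_piFinset_commonNbrs_comm {M : Type} [AddCommMonoid M] {k l : ℕ} (B C : Finset V)
    (F : (Fin l → V) → M) :
    ∑ v ∈ Fintype.piFinset (fun _ : Fin k => B), ∑ P ∈ Fintype.piFinset (fun _ => commonNbrs G v C),
        F P =
      ∑ P ∈ Fintype.piFinset (fun _ : Fin l => C), #(commonNbrs G P B) ^ k • F P := by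
  rw [sum_comm' (t' := Fintype.piFinset fun _ => C)
    (s' := fun P => Fintype.piFinset fun _ => commonNbrs G P B)]
  · simp
  intro v P
  rw [mem_piFinset_commonNbrs, mem_piFinset_commonNbrs]
  exact ⟨fun ⟨hv, hP, h⟩ => ⟨⟨hv, fun j i => (h i j).symm⟩, hP⟩,
    fun ⟨⟨hv, h⟩, hP⟩ => ⟨hv, hP, fun i j => (h j i).symm⟩⟩

lemma sum_card_commonNbrs_pow_comm {k l : ℕ} (B C : Finset V) :
    ∑ v ∈ Fintype.piFinset (fun _ : Fin k => B), #(commonNbrs G v C) ^ l =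
      ∑ P ∈ Fintype.piFinset (fun _ : Fin l => C), #(commonNbrs G P B) ^ k := by
  have h := sum_piFinset_commonNbrs_comm (G := G) (k := k) B C (fun _ : Fin l → V => 1)
  simp only [sum_const, Fintype.card_piFinset_const, smul_eq_mul, mul_one] at h
  exact h

end CommonNbrs

section Counting

variable {α : ℝ} {B C : Finset V}

lemma sum_card_commonNbrs_ge (hα : 0 ≤ α) (hdeg : ∀ x ∈ B, α * #C ≤ #{y ∈ C | G.Adj x y})
    (t : ℕ) :
    α ^ t * #C * #B ^ t ≤
      ∑ u ∈ Fintype.piFinset (fun _ : Fin t => B), (#(commonNbrs G u C) : ℝ) := by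
  have hswap : ∀ (k l : ℕ) (B C : Finset V),
      ∑ v ∈ Fintype.piFinset (fun _ : Fin k => B), (#(commonNbrs G v C) : ℝ) ^ l =
        ∑ P ∈ Fintype.piFinset (fun _ : Fin l => C), (#(commonNbrs G P B) : ℝ) ^ k := by
    intro k l B C; exact_mod_cast sum_card_commonNbrs_pow_comm B C
  have hedges : α * #B * #(Fintype.piFinset fun _ : Fin 1 => C) ≤
      ∑ y ∈ Fintype.piFinset (fun _ : Fin 1 => C), (#(commonNbrs G y B) : ℝ) := by
    have h := card_nsmul_le_sum (Fintype.piFinset fun _ : Fin 1 => B)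
      (fun x => (#(commonNbrs G x C) : ℝ)) (α * #C) fun x hx => by
        simpa [commonNbrs_fin_one] using hdeg (x 0) (Fintype.mem_piFinset.mp hx 0)
    have hBC := hswap 1 1 B C
    simp only [pow_one, Fintype.card_piFinset_const, nsmul_eq_mul] at hBC h ⊢
    linarith
  calc α ^ t * #C * #B ^ t = (α * #B) ^ t * #(Fintype.piFinset fun _ : Fin 1 => C) := by
        simp; ring
    _ ≤ ∑ y ∈ Fintype.piFinset (fun _ : Fin 1 => C), (#(commonNbrs G y B) : ℝ) ^ t :=
        pow_mul_card_le_sum_pow (fun _ _ => by positivity) (by positivity) hedges t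
    _ = _ := by simpa using (hswap t 1 B C).symm

lemma sum_card_commonNbrs_pow_ge (hα : 0 ≤ α) (hdeg : ∀ x ∈ B, α * #C ≤ #{y ∈ C | G.Adj x y})
    (t k : ℕ) :
    (α ^ t * #C) ^ k * #B ^ t ≤
      ∑ u ∈ Fintype.piFinset (fun _ : Fin t => B), (#(commonNbrs G u C) : ℝ) ^ k := by
  have h := pow_mul_card_le_sum_pow (S := Fintype.piFinset fun _ : Fin t => B)
    (f := fun u => (#(commonNbrs G u C) : ℝ)) (fun _ _ => by positivity)
    (by positivity : 0 ≤ α ^ t * #C) (by simpa using sum_card_commonNbrs_ge hα hdeg t) k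
  simpa using h

lemma sum_sum_dpow_defect_le {s t : ℕ} (hst : s ≤ t) {θ : ℝ} (hθ : 0 ≤ θ) (k : ℕ) :
    ∑ v ∈ Fintype.piFinset (fun _ : Fin t => B),
      ∑ P ∈ Fintype.piFinset (fun _ : Fin k => commonNbrs G v C),
        dpow (defect G θ P B) s ≤ ENNReal.ofReal (#C ^ k * θ ^ t) := by
  rw [sum_piFinset_commonNbrs_comm]
  calc ∑ P ∈ Fintype.piFinset (fun _ : Fin k => C),
        #(commonNbrs G P B) ^ t • dpow (defect G θ P B) s
      ≤ ∑ _P ∈ Fintype.piFinset (fun _ : Fin k => C), ENNReal.ofReal θ ^ t := by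
        gcongr with P
        rw [nsmul_eq_mul, Nat.cast_pow]
        exact card_commonNbrs_pow_mul_dpow_defect_le hst θ P B
    _ = ENNReal.ofReal (#C ^ k * θ ^ t) := by
        rw [sum_const, Fintype.card_piFinset_const, nsmul_eq_mul,
          ENNReal.ofReal_mul (by positivity),
          ENNReal.ofReal_pow hθ]
        norm_cast

end Counting

section DependentRandomChoice

variable {α : ℝ} {B C : Finset V} {s : ℕ} {θ l : ℝ}

lemma sum_filter_card_commonNbrs_lt_le {c : ℝ} (hc : 0 ≤ c) {t k : ℕ} (hk : k ≠ 0) :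
    ∑ u ∈ Fintype.piFinset (fun _ : Fin t => B) with ¬ c / 4 ≤ #(commonNbrs G u C),
        (#(commonNbrs G u C) : ℝ≥0∞) ^ k ≤ ENNReal.ofReal (c ^ k * #B ^ t / 4) := by
  calc _ ≤ ∑ u ∈ Fintype.piFinset (fun _ : Fin t => B) with ¬ c / 4 ≤ #(commonNbrs G u C),
          ENNReal.ofReal ((c / 4) ^ k) := by
        gcongr with u hu
        rw [natCast_pow_eq_ofReal]
        exact ENNReal.ofReal_le_ofReal
          (pow_le_pow_left₀ (by positivity) (not_le.mp (mem_filter.mp hu).2).le k)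
    _ ≤ #(Fintype.piFinset fun _ : Fin t => B) * ENNReal.ofReal ((c / 4) ^ k) := by
        rw [sum_const, nsmul_eq_mul]; gcongr; exact filter_subset _ _
    _ = ENNReal.ofReal ((c / 4) ^ k * #B ^ t) := by
        rw [mul_comm, ENNReal.ofReal_mul (by positivity), Fintype.card_piFinset_const]
        norm_cast
    _ ≤ ENNReal.ofReal (c ^ k * #B ^ t / 4) := by
        refine ENNReal.ofReal_le_ofReal ?_
        have h4 : (4 : ℝ) ≤ 4 ^ k := le_self_pow₀ (by norm_num) hk
        rw [div_pow, mul_div_right_comm]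
        gcongr

lemma exists_tuple_card_commonNbrs_ge (hα : 0 < α) (hB : B.Nonempty) (hC : C.Nonempty)
    (hdeg : ∀ x ∈ B, α * #C ≤ #{y ∈ C | G.Adj x y}) {t k : ℕ} (hk : k ≠ 0)
    (p : (Fin t → V) → Prop) [DecidablePred p]
    (hp : ∑ u ∈ Fintype.piFinset (fun _ : Fin t => B) with ¬ p u, (#(commonNbrs G u C) : ℝ≥0∞) ^ k ≤
      ENNReal.ofReal ((α ^ t * #C) ^ k * #B ^ t / 2)) :
    ∃ u ∈ Fintype.piFinset (fun _ : Fin t => B), α ^ t * #C / 4 ≤ #(commonNbrs G u C) ∧ p u := by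
  set c := α ^ t * #C
  have hmass : ENNReal.ofReal (c ^ k * #B ^ t) ≤
      ∑ u ∈ Fintype.piFinset (fun _ : Fin t => B), (#(commonNbrs G u C) : ℝ≥0∞) ^ k := by
    simp only [natCast_pow_eq_ofReal]
    rw [← ENNReal.ofReal_sum_of_nonneg fun _ _ => by positivity]
    exact ENNReal.ofReal_le_ofReal (sum_card_commonNbrs_pow_ge hα.le hdeg t k)
  have hpos : 0 < c ^ k * #B ^ t := by have := hC.card_pos; have := hB.card_pos; positivity
  refine exists_mem_of_sum_filter_not_lt (w := fun u => (#(commonNbrs G u C) : ℝ≥0∞) ^ k)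
    ((sum_filter_not_and_le _ _ _).trans_lt ?_)
  calc _ ≤ ENNReal.ofReal (c ^ k * #B ^ t / 4) + ENNReal.ofReal (c ^ k * #B ^ t / 2) :=
        add_le_add (sum_filter_card_commonNbrs_lt_le (by positivity) hk) hp
    _ < ENNReal.ofReal (c ^ k * #B ^ t) := by
        rw [← ENNReal.ofReal_add (by positivity) (by positivity),
          ENNReal.ofReal_lt_ofReal_iff hpos]
        linarith
    _ ≤ _ := hmass

lemma ofReal_mul_sum_filter_not_mu_le {t : ℕ} (hst : s ≤ t) (hθ : 0 ≤ θ) (k : ℕ) :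
    ENNReal.ofReal l * ∑ u ∈ Fintype.piFinset (fun _ : Fin t => B) with
        ¬ mu G s θ (Fintype.piFinset fun _ : Fin k => commonNbrs G u C) B ≤ ENNReal.ofReal l,
        (#(commonNbrs G u C) : ℝ≥0∞) ^ k ≤ ENNReal.ofReal (#C ^ k * θ ^ t) := by
  simp only [mu_le_iff, Fintype.card_piFinset_const, Nat.cast_pow]
  exact (mul_sum_filter_not_le_mul_le _ _ _).trans (sum_sum_dpow_defect_le hst hθ k)

lemma exists_subset_card_ge_mu_le (hα : 0 < α) (hB : B.Nonempty) (hC : C.Nonempty)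
    (hdeg : ∀ x ∈ B, α * #C ≤ #{y ∈ C | G.Adj x y}) {t k : ℕ} (hst : s ≤ t) (hk : k ≠ 0)
    (hθ : 0 ≤ θ) (hl : 0 < l) (hθl : #C ^ k * θ ^ t ≤ l * ((α ^ t * #C) ^ k * #B ^ t / 2)) :
    ∃ A ⊆ C, α ^ t * #C / 4 ≤ #A ∧
      mu G s θ (Fintype.piFinset fun _ : Fin k => A) B ≤ ENNReal.ofReal l := by
  obtain ⟨u, -, hu, hmu⟩ := exists_tuple_card_commonNbrs_ge hα hB hC hdeg hk
    (fun u => mu G s θ (Fintype.piFinset fun _ : Fin k => commonNbrs G u C) B ≤ ENNReal.ofReal l)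
    (le_ofReal_of_ofReal_mul_le hl
      ((ofReal_mul_sum_filter_not_mu_le hst hθ k).trans (ENNReal.ofReal_le_ofReal hθl)))
  exact ⟨_, commonNbrs_subset u C, hu, hmu⟩

lemma ofReal_mul_sum_filter_not_mu_le_of_mu_le {A : Finset V} (hA : A.Nonempty) {l₁ : ℝ}
    {d t : ℕ} (hA₁ : mu G s θ (Fintype.piFinset fun _ : Fin (d + t) => A) C ≤ ENNReal.ofReal l₁) :
    ENNReal.ofReal l * ∑ u ∈ Fintype.piFinset (fun _ : Fin t => A) with
        ¬ mu G s θ (Fintype.piFinset fun _ : Fin d => A) (commonNbrs G u C) ≤ ENNReal.ofReal l,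
        (#(commonNbrs G u C) : ℝ≥0∞) ^ d ≤ ENNReal.ofReal (l₁ * #C ^ d * #A ^ t) := by
  set X := {u ∈ Fintype.piFinset (fun _ : Fin t => A) |
    ¬ mu G s θ (Fintype.piFinset fun _ : Fin d => A) (commonNbrs G u C) ≤ ENNReal.ofReal l}
  have hcount : (#A : ℝ≥0∞) ^ d * (ENNReal.ofReal l * #X) ≤
      (#A : ℝ≥0∞) ^ d * (ENNReal.ofReal l₁ * #A ^ t) := by
    calc _ = ENNReal.ofReal l * ∑ u ∈ X, (#A : ℝ≥0∞) ^ d := by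
          rw [sum_const, nsmul_eq_mul]; ring
      _ ≤ ∑ u ∈ Fintype.piFinset (fun _ : Fin t => A), ∑ Q ∈ Fintype.piFinset (fun _ : Fin d => A),
            dpow (defect G θ Q (commonNbrs G u C)) s := by
          simp only [X, mu_le_iff, Fintype.card_piFinset_const, Nat.cast_pow]
          exact mul_sum_filter_not_le_mul_le _ _ _
      _ = ∑ P ∈ Fintype.piFinset (fun _ : Fin (d + t) => A), dpow (defect G θ P C) s := by
          rw [sum_comm, sum_piFinset_fin_add]; simp only [defect_commonNbrs]
      _ ≤ ENNReal.ofReal l₁ * #A ^ (d + t) := by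
          simpa [mu_le_iff, Fintype.card_piFinset_const] using hA₁
      _ = (#A : ℝ≥0∞) ^ d * (ENNReal.ofReal l₁ * #A ^ t) := by ring
  have hA' : (#A : ℝ≥0∞) ^ d ≠ 0 := pow_ne_zero _ (by simpa using hA.ne_empty)
  replace hcount := (ENNReal.mul_le_mul_iff_right hA' (by simp)).mp hcount
  calc _ ≤ ENNReal.ofReal l * ∑ u ∈ X, (#C : ℝ≥0∞) ^ d := by
        gcongr with u
        exact commonNbrs_subset u C
    _ = ENNReal.ofReal l * #X * #C ^ d := by rw [sum_const, nsmul_eq_mul, mul_assoc]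
    _ ≤ ENNReal.ofReal l₁ * #A ^ t * #C ^ d := by gcongr
    _ = ENNReal.ofReal (l₁ * #C ^ d * #A ^ t) := by
        rw [show l₁ * #C ^ d * #A ^ t = l₁ * ((#A ^ t * #C ^ d : ℕ) : ℝ) by push_cast; ring,
          ENNReal.ofReal_mul' (by positivity), ENNReal.ofReal_natCast]
        push_cast; ring

lemma exists_subset_card_ge_mu_le_and_mu_le {A : Finset V} (hα : 0 < α) (hA : A.Nonempty)
    (hC : C.Nonempty) (hdeg : ∀ x ∈ A, α * #C ≤ #{y ∈ C | G.Adj x y}) {d t : ℕ} (hst : s ≤ t)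
    (hd : d ≠ 0) {l₁ : ℝ} (hθ : 0 ≤ θ) (hl : 0 < l)
    (hA₁ : mu G s θ (Fintype.piFinset fun _ : Fin (d + t) => A) C ≤ ENNReal.ofReal l₁)
    (hθl : #C ^ d * θ ^ t ≤ l * ((α ^ t * #C) ^ d * #A ^ t / 4))
    (hl₁ : l₁ * #C ^ d ≤ l * ((α ^ t * #C) ^ d / 4)) :
    ∃ A' ⊆ C, α ^ t * #C / 4 ≤ #A' ∧
      mu G s θ (Fintype.piFinset fun _ : Fin d => A) A' ≤ ENNReal.ofReal l ∧
      mu G s θ (Fintype.piFinset fun _ : Fin d => A') A ≤ ENNReal.ofReal l := by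
  obtain ⟨u, -, hu, hmu₁, hmu₂⟩ := exists_tuple_card_commonNbrs_ge hα hA hC hdeg hd
    (fun u => mu G s θ (Fintype.piFinset fun _ : Fin d => commonNbrs G u C) A ≤ ENNReal.ofReal l ∧
      mu G s θ (Fintype.piFinset fun _ : Fin d => A) (commonNbrs G u C) ≤ ENNReal.ofReal l) (by
    have h₁ := le_ofReal_of_ofReal_mul_le hl
      ((ofReal_mul_sum_filter_not_mu_le (G := G) (B := A) hst hθ d).trans
        (ENNReal.ofReal_le_ofReal hθl))
    have h₂ := le_ofReal_of_ofReal_mul_le (y := (α ^ t * #C) ^ d * #A ^ t / 4) hl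
      ((ofReal_mul_sum_filter_not_mu_le_of_mu_le hA hA₁).trans (ENNReal.ofReal_le_ofReal (by
        have : 0 ≤ (#A : ℝ) ^ t := by positivity
        nlinarith)))
    calc _ ≤ _ := sum_filter_not_and_le _ _ _
      _ ≤ _ := add_le_add h₁ h₂
      _ = ENNReal.ofReal ((α ^ t * #C) ^ d * #A ^ t / 2) := by
          rw [← ENNReal.ofReal_add (by positivity) (by positivity)]; ring_nf)
  exact ⟨_, commonNbrs_subset u C, hu, hmu₂, hmu₁⟩

end DependentRandomChoice

section Pair

variable {α η : ℝ} {B C : Finset V} {s t d : ℕ}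

lemma exists_drc_pair_of_ne_zero (hα : 0 < α) (hη0 : 0 < η) (hη : η ≤ α ^ (2 * d) / 16)
    (hB : B.Nonempty) (hBC : #C = #B) (hdegB : ∀ x ∈ B, α * #C ≤ #{y ∈ C | G.Adj x y})
    (hdegC : ∀ y ∈ C, α * #B ≤ #{x ∈ B | G.Adj y x}) (hst : s ≤ t) (ht : t ≠ 0) (hd : d ≠ 0) :
    ∃ A ⊆ B, ∃ A' ⊆ C, α ^ t * #B / 4 ≤ #A ∧ α ^ t * #B / 4 ≤ #A' ∧
      mu G s (η * α ^ (d + t) * #B / 2) (Fintype.piFinset fun _ : Fin d => A) A' ≤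
        ENNReal.ofReal (2 * η ^ ((t : ℝ) / 2)) ∧
      mu G s (η * α ^ (d + t) * #B / 2) (Fintype.piFinset fun _ : Fin d => A') A ≤
        ENNReal.ofReal (2 * η ^ ((t : ℝ) / 2)) := by
  have hC : C.Nonempty := card_pos.mp (hBC ▸ hB.card_pos)
  obtain ⟨x, hx⟩ := hB
  have hα₁ : α ≤ 1 := le_one_of_mul_card_le_card_filter hC (hdegB x hx)
  have hq0 : 0 < η ^ ((t : ℝ) / 2) := Real.rpow_pos_of_pos hη0 _
  have hq := rpow_div_two_mul_four_pow_le (t := t) hα.le hη0.le hη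
  have hθ : 0 ≤ η * α ^ (d + t) * #B / 2 := by positivity
  obtain ⟨A, hA, hAcard, hmuA⟩ := exists_subset_card_ge_mu_le (k := d + t) (l := 2 * (η / 2) ^ t)
    hα hC ⟨x, hx⟩ hdegC hst (by omega) hθ (by positivity) (by rw [hBC]; exact le_of_eq (by ring))
  have hc : (0 : ℝ) < α ^ t * #B / 4 := by have := card_pos.mpr ⟨x, hx⟩; positivity
  have hAne : A.Nonempty := card_pos.mp (by exact_mod_cast hc.trans_le hAcard)
  have hθl := pow_mul_threshold_pow_le (d := d) (m := #B) hα.le hα₁ (by positivity) ht hq0.le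
    (rpow_div_two_sq hη0.le t) hq hAcard
  have hl₁ := two_mul_half_pow_mul_pow_le (d := d) (m := #B) (by positivity) ht hq0.le
    (rpow_div_two_sq hη0.le t) hq
  obtain ⟨A', hA', hA'card, h₁, h₂⟩ :=
    exists_subset_card_ge_mu_le_and_mu_le (l := 2 * η ^ ((t : ℝ) / 2)) hα hAne hC
    (fun y hy => hdegB y (hA hy)) hst hd hθ (by positivity) hmuA
    (by rwa [hBC]) (by rwa [hBC])
  exact ⟨A, hA, A', hA', hAcard, hBC ▸ hA'card, h₁, h₂⟩

lemma exists_drc_pair (hα : 0 < α) (hη0 : 0 < η) (hη : η ≤ α ^ (2 * d) / 16) (hBC : #C = #B)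
    (hdegB : ∀ x ∈ B, α * #C ≤ #{y ∈ C | G.Adj x y})
    (hdegC : ∀ y ∈ C, α * #B ≤ #{x ∈ B | G.Adj y x}) (hst : s ≤ t) :
    ∃ A ⊆ B, ∃ A' ⊆ C, α ^ t * #B / 4 ≤ #A ∧ α ^ t * #B / 4 ≤ #A' ∧
      mu G s (η * α ^ (d + t) * #B / 2) (Fintype.piFinset fun _ : Fin d => A) A' ≤
        ENNReal.ofReal (2 * η ^ ((t : ℝ) / 2)) ∧
      mu G s (η * α ^ (d + t) * #B / 2) (Fintype.piFinset fun _ : Fin d => A') A ≤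
        ENNReal.ofReal (2 * η ^ ((t : ℝ) / 2)) := by
  rcases B.eq_empty_or_nonempty with rfl | hB
  · obtain rfl : C = ∅ := card_eq_zero.mp hBC
    refine ⟨∅, subset_rfl, ∅, subset_rfl, by simp, by simp, ?_, ?_⟩ <;>
      rw [mu_eq_zero_of_le_card fun _ _ => by simp] <;> exact zero_le
  by_cases htd : t ≠ 0 ∧ d ≠ 0
  · exact exists_drc_pair_of_ne_zero hα hη0 hη hB hBC hdegB hdegC hst htd.1 htd.2
  obtain ⟨x, hx⟩ := hB
  have hα₁ := le_one_of_mul_card_le_card_filter (card_pos.mp (hBC ▸ card_pos.mpr ⟨x, hx⟩))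
    (hdegB x hx)
  have hαt : α ^ t ≤ 1 := pow_le_one₀ hα.le hα₁
  have hcard : α ^ t * #B / 4 ≤ #B := by nlinarith [pow_pos hα t]
  refine ⟨B, subset_rfl, C, subset_rfl, hcard, hBC ▸ hcard, ?_⟩
  rcases not_and_or.mp htd with ht | hd
  · obtain rfl : t = 0 := not_not.mp ht
    obtain rfl : s = 0 := Nat.le_zero.mp hst
    have h1 : (1 : ℝ≥0∞) ≤ ENNReal.ofReal (2 * η ^ (((0 : ℕ) : ℝ) / 2)) := by norm_num
    exact ⟨mu_zero_le_one.trans h1, mu_zero_le_one.trans h1⟩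
  · obtain rfl : d = 0 := not_not.mp hd
    have hη1 : η ≤ 1 / 16 := by simpa using hη
    have hθ : η * α ^ (0 + t) * #B / 2 ≤ #B := by
      rw [zero_add]; nlinarith [pow_pos hα t, (#B).cast_nonneg (α := ℝ)]
    rw [mu_eq_zero_of_le_card fun Q _ => by rwa [commonNbrs_fin_zero, hBC],
      mu_eq_zero_of_le_card fun Q _ => by rwa [commonNbrs_fin_zero]]
    exact ⟨zero_le, zero_le⟩

end Pair

end Graph

end BurrErdosLee

theorem drc_both_sides_general (V : Type) [Fintype V] [DecidableEq V] (G : SimpleGraph V)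
    (m d s t : ℕ) (hst : s ≤ t)
    (α η : ℝ) (hα : 0 < α) (hη0 : 0 < η) (hη : η ≤ α ^ (2 * d) / 16)
    (V1 V2 : Finset V) (hdisj : Disjoint V1 V2)
    (hV1 : V1.card = m) (hV2 : V2.card = m)
    (hbip : ∀ x y, G.Adj x y → (x ∈ V1 ∧ y ∈ V2) ∨ (x ∈ V2 ∧ y ∈ V1))
    (hmindeg : ∀ v : V, α * (m : ℝ) ≤ ((Finset.univ.filter fun w => G.Adj v w).card : ℝ)) :
    ∃ A1 ⊆ V1, ∃ A2 ⊆ V2,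
      α ^ t * (m : ℝ) / 4 ≤ (A1.card : ℝ) ∧ α ^ t * (m : ℝ) / 4 ≤ (A2.card : ℝ) ∧
      ∀ θ : ℝ, θ ≤ η * α ^ (d + t) * (m : ℝ) / 2 →
        mu G s θ (Fintype.piFinset fun _ : Fin d => A1) A2 ≤
          ENNReal.ofReal (2 * η ^ ((t : ℝ) / 2)) ∧
        mu G s θ (Fintype.piFinset fun _ : Fin d => A2) A1 ≤
          ENNReal.ofReal (2 * η ^ ((t : ℝ) / 2)) := by
  have hdeg₁ : ∀ x ∈ V1, α * #V2 ≤ #{y ∈ V2 | G.Adj x y} := fun x hx => by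
    rw [filter_adj_eq_of_mem hdisj hbip hx, hV2]; exact hmindeg x
  have hdeg₂ : ∀ y ∈ V2, α * #V1 ≤ #{x ∈ V1 | G.Adj y x} := fun y hy => by
    rw [filter_adj_eq_of_mem hdisj.symm (fun x y h => (hbip x y h).symm) hy, hV1]; exact hmindeg y
  obtain ⟨A1, hA1, A2, hA2, hA1c, hA2c, h12, h21⟩ :=
    exists_drc_pair hα hη0 hη (hV2.trans hV1.symm) hdeg₁ hdeg₂ hst
  rw [hV1] at hA1c hA2c h12 h21
  exact ⟨A1, hA1, A2, hA2, hA1c, hA2c,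
    fun θ hθ => ⟨(mu_mono hθ).trans h12, (mu_mono hθ).trans h21⟩⟩

/-- (Lemma 5.3) In a bipartite graph with parts `V₁, V₂` of size `m`
and minimum degree at least `α·m`, there are `A₁ ⊆ V₁`, `A₂ ⊆ V₂` with
`|A₁|, |A₂| ≥ α^t·m/4` such that for all `θ ≤ η·α^(d+t)·m/2` both
`μ_{s,θ}(A₁^d; A₂) ≤ 2η^(t/2)` and `μ_{s,θ}(A₂^d; A₁) ≤ 2η^(t/2)`. -/
theorem drc_both_sides (V : Type) [Fintype V] [DecidableEq V] (G : SimpleGraph V)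
    (m d s t : ℕ) (hst : s ≤ t)
    (α η : ℝ) (hα : 0 < α) (hη0 : 0 < η) (hη : η ≤ α ^ (2 * d) / 16)
    (V1 V2 : Finset V) (hdisj : Disjoint V1 V2) (hunion : V1 ∪ V2 = Finset.univ)
    (hV1 : V1.card = m) (hV2 : V2.card = m)
    (hbip : ∀ x y, G.Adj x y → (x ∈ V1 ∧ y ∈ V2) ∨ (x ∈ V2 ∧ y ∈ V1))
    (hmindeg : ∀ v : V, α * (m : ℝ) ≤ ((Finset.univ.filter fun w => G.Adj v w).card : ℝ)) :
    ∃ A1 ⊆ V1, ∃ A2 ⊆ V2,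
      α ^ t * (m : ℝ) / 4 ≤ (A1.card : ℝ) ∧ α ^ t * (m : ℝ) / 4 ≤ (A2.card : ℝ) ∧
      ∀ θ : ℝ, θ ≤ η * α ^ (d + t) * (m : ℝ) / 2 →
        mu G s θ (Fintype.piFinset fun _ : Fin d => A1) A2 ≤
          ENNReal.ofReal (2 * η ^ ((t : ℝ) / 2)) ∧
        mu G s θ (Fintype.piFinset fun _ : Fin d => A2) A1 ≤
          ENNReal.ofReal (2 * η ^ ((t : ℝ) / 2)) :=
  drc_both_sides_general V G m d s t hst α η hα hη0 hη V1 V2 hdisj hV1 hV2 hbip hmindeg
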